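/- Let δ0, δ1, δ2 > 0 and define ψ1(x) = ((δ0 + 2δ1)·x + δ0·δ1)/(2x + δ0) and ψ2(x) = ((δ0 + 2δ2)·x + δ0·δ2)/(2x + δ0) for x > 0. Then the pair (θ1*, θ2*) with θ1* = δ1/2 + (1/2)·√(((δ0 + δ1)/(δ0 + δ2))·(δ0·δ1 + δ0·δ2 + δ1·δ2)) and θ2* = δ2/2 + (1/2)·√(((δ0 + δ2)/(δ0 + δ1))·(δ0·δ1 + δ0·δ2 + δ1·δ2)) is the unique pair in (0,∞)² satisfying θ1* = ψ1(θ2*) and θ2* = ψ2(θ1*). -/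

import Mathlib

/-- The reinsurer's best-response function in the no-competition case (λ = 0). -/
noncomputable def psi (δ0 δ x : ℝ) : ℝ := ((δ0 + 2 * δ) * x + δ0 * δ) / (2 * x + δ0)

theorem stmt_16 (δ0 δ1 δ2 : ℝ) (hδ0 : 0 < δ0) (hδ1 : 0 < δ1) (hδ2 : 0 < δ2)
    (θ1s θ2s : ℝ)
    (hθ1s : θ1s = δ1 / 2 +
      (1 / 2) * Real.sqrt (((δ0 + δ1) / (δ0 + δ2)) * (δ0 * δ1 + δ0 * δ2 + δ1 * δ2)))
    (hθ2s : θ2s = δ2 / 2 +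
      (1 / 2) * Real.sqrt (((δ0 + δ2) / (δ0 + δ1)) * (δ0 * δ1 + δ0 * δ2 + δ1 * δ2))) :
    (0 < θ1s ∧ 0 < θ2s ∧ θ1s = psi δ0 δ1 θ2s ∧ θ2s = psi δ0 δ2 θ1s) ∧
    ∀ θ1 θ2 : ℝ, 0 < θ1 → 0 < θ2 → θ1 = psi δ0 δ1 θ2 → θ2 = psi δ0 δ2 θ1 →
      θ1 = θ1s ∧ θ2 = θ2s := by
  set s := Real.sqrt (((δ0 + δ1) / (δ0 + δ2)) * (δ0 * δ1 + δ0 * δ2 + δ1 * δ2)) with hs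
  set t := Real.sqrt (((δ0 + δ2) / (δ0 + δ1)) * (δ0 * δ1 + δ0 * δ2 + δ1 * δ2)) with ht
  have hs0 : 0 ≤ s := Real.sqrt_nonneg _
  have ht0 : 0 ≤ t := Real.sqrt_nonneg _
  have hs2 : s ^ 2 = ((δ0 + δ1) / (δ0 + δ2)) * (δ0 * δ1 + δ0 * δ2 + δ1 * δ2) :=
    Real.sq_sqrt (by positivity)
  have ht2 : t ^ 2 = ((δ0 + δ2) / (δ0 + δ1)) * (δ0 * δ1 + δ0 * δ2 + δ1 * δ2) :=
    Real.sq_sqrt (by positivity)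
  have hs2' : (δ0 + δ2) * s ^ 2 = (δ0 + δ1) * (δ0 * δ1 + δ0 * δ2 + δ1 * δ2) := by
    rw [hs2]; field_simp
  have ht2' : (δ0 + δ1) * t ^ 2 = (δ0 + δ2) * (δ0 * δ1 + δ0 * δ2 + δ1 * δ2) := by
    rw [ht2]; field_simp
  have hst : s * t = δ0 * δ1 + δ0 * δ2 + δ1 * δ2 := by
    rw [hs, ht, ← Real.sqrt_mul (by positivity)]
    rw [show (((δ0 + δ1) / (δ0 + δ2)) * (δ0 * δ1 + δ0 * δ2 + δ1 * δ2)) *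
        (((δ0 + δ2) / (δ0 + δ1)) * (δ0 * δ1 + δ0 * δ2 + δ1 * δ2)) =
        (δ0 * δ1 + δ0 * δ2 + δ1 * δ2) ^ 2 from by field_simp]
    exact Real.sqrt_sq (by positivity)
  have hBsAt : (δ0 + δ2) * s = (δ0 + δ1) * t := by
    have h : ((δ0 + δ2) * s) ^ 2 = ((δ0 + δ1) * t) ^ 2 := by
      linear_combination (δ0 + δ2) * hs2' - (δ0 + δ1) * ht2'
    have h1 : (0:ℝ) ≤ (δ0 + δ2) * s := by positivity
    have h2 : (0:ℝ) ≤ (δ0 + δ1) * t := by positivity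
    rw [← Real.sqrt_sq h1, h, Real.sqrt_sq h2]
  have hθ1pos : 0 < θ1s := by rw [hθ1s]; positivity
  have hθ2pos : 0 < θ2s := by rw [hθ2s]; positivity
  have hsgt : δ1 < s := by nlinarith [hs2', sq_nonneg (s - δ1)]
  constructor
  · refine ⟨hθ1pos, hθ2pos, ?_, ?_⟩
    · rw [psi, eq_div_iff (by positivity : (0:ℝ) < 2 * θ2s + δ0).ne']
      rw [hθ1s, hθ2s]
      linear_combination (1/2) * hBsAt + (1/2) * hst
    · rw [psi, eq_div_iff (by positivity : (0:ℝ) < 2 * θ1s + δ0).ne']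
      rw [hθ1s, hθ2s]
      linear_combination (1/2) * hst - (1/2) * hBsAt
  · intro θ1 θ2 h1 h2 he1 he2
    rw [psi, eq_div_iff (by positivity : (0:ℝ) < 2 * θ2 + δ0).ne'] at he1
    rw [psi, eq_div_iff (by positivity : (0:ℝ) < 2 * θ1 + δ0).ne'] at he2
    -- quadratic in θ1
    have hq : (δ0 + δ2) * (2 * θ1 - δ1) ^ 2 =
        (δ0 + δ1) * (δ0 * δ1 + δ0 * δ2 + δ1 * δ2) := by
      linear_combination (2 * (δ0 + δ1) + 2 * θ1 - (δ0 + 2 * δ1)) * he1 -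
        (2 * θ1 - (δ0 + 2 * δ1)) * he2
    have hqs : (δ0 + δ2) * (2 * θ1s - δ1) ^ 2 =
        (δ0 + δ1) * (δ0 * δ1 + δ0 * δ2 + δ1 * δ2) := by
      rw [hθ1s]
      linear_combination hs2'
    have hsq : (2 * θ1 - δ1) ^ 2 = (2 * θ1s - δ1) ^ 2 :=
      mul_left_cancel₀ (by positivity : (0:ℝ) < δ0 + δ2).ne' (hq.trans hqs.symm)
    have hθ1eq : θ1 = θ1s := by
      rcases sq_eq_sq_iff_eq_or_eq_neg.mp hsq with h | h
      · linarith
      · exfalso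
        have : 2 * θ1s - δ1 = s := by rw [hθ1s]; ring
        nlinarith
    refine ⟨hθ1eq, ?_⟩
    have hlin : 2 * (δ0 + δ2) * θ1 - 2 * (δ0 + δ1) * θ2 = δ0 * δ1 - δ0 * δ2 := by
      linear_combination he1 - he2
    have hlins : 2 * (δ0 + δ2) * θ1s - 2 * (δ0 + δ1) * θ2s = δ0 * δ1 - δ0 * δ2 := by
      rw [hθ1s, hθ2s]
      linear_combination hBsAt
    have : 2 * (δ0 + δ1) * θ2 = 2 * (δ0 + δ1) * θ2s := by
      linear_combination 2 * (δ0 + δ2) * hθ1eq - hlin + hlins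
    exact mul_left_cancel₀ (by positivity : (0:ℝ) < 2 * (δ0 + δ1)).ne' this
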